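/- Fix k ∈ ℕ with x^k ∈ dom g, and suppose the unique minimizer x̄^k of Θ_k satisfies x̄^k ≠ x^k. Then: (i) every y ∈ dom g sufficiently close to x̄^k satisfies both Θ_k(y) < Θ_k(x^k) and Θ_k(y) − Θ_k(x̄^k) ≤ ε_k‖y − x^k‖², so the inexactness criterion is attainable; and (ii) for any y^k ∈ dom g satisfying this criterion with d^k = y^k − x^k ≠ 0, there exists a nonnegative integer m with F(x^k) − F(x^k + β^m d^k) ≥ σβ^m‖d^k‖², so the Armijo line search terminates. -/

import Mathlib

/-!
The model `Θ` is `μ`-strongly convex, so comparing its minimizer `x̄` with the midpoint of `x̄`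
and `x` gives `Θ x̄ + μ/4 ‖x̄ - x‖² ≤ Θ x = F x`. Since `x̄ ≠ x`, both inequalities of the
inexactness criterion are strict at `y = x̄`, and continuity of `Θ` on `dom g` propagates them to
a neighbourhood of `x̄`.

For the line search, `Θ y < Θ x` says that the first-order decrease `⟪∇f x, d⟫ + g y - g x` of
`F` along `d = y - x` is below `-(μ/2) ‖d‖² ≤ -σ ‖d‖²`. Near `t = 0` the smooth part of
`F (x + t d)` is linear up to `o(t)` and the convex part lies below its chord, so every small
enough step `β ^ m` is accepted.
-/

open Set Filter
open scoped RealInnerProductSpace ENNReal Topology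

noncomputable section

attribute [local instance] Classical.propDecidable

variable {X : Type*} [NormedAddCommGroup X] [InnerProductSpace ℝ X] [FiniteDimensional ℝ X]

/-- `g` extended by `+∞` outside its domain `s`. -/
def extE (g : X → ℝ) (s : Set X) (x : X) : EReal := if x ∈ s then (g x : EReal) else ⊤

/-- The objective `F = f + g`, extended-real valued. -/
def FE (f g : X → ℝ) (s : Set X) (x : X) : EReal := (f x : EReal) + extE g s x

/-- The strongly convex model `Θ_k` with base point `xk` and metric `G`, evaluated at `z`. -/
def Theta (f g : X → ℝ) (fgrad : X → X) (G : X →L[ℝ] X) (xk z : X) : ℝ :=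
  f xk + ⟪fgrad xk, z - xk⟫ + (1/2) * ⟪z - xk, G (z - xk)⟫ + g z

lemma FE_of_mem {E : Type*} {f g : E → ℝ} {s : Set E} {z : E} (hz : z ∈ s) :
    FE f g s z = ((f z + g z : ℝ) : EReal) := by
  rw [FE, extE, if_pos hz, EReal.coe_add]

lemma ContinuousWithinAt.exists_lt_and_sub_le_mul_sq {E : Type*} [NormedAddCommGroup E]
    {φ : E → ℝ} {s : Set E} {a b : E} {ε : ℝ}
    (hφ : ContinuousWithinAt φ s a) (hab : φ a < φ b) (hne : a ≠ b) (hε : 0 < ε) :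
    ∃ δ > (0 : ℝ), ∀ y ∈ s, ‖y - a‖ < δ → φ y < φ b ∧ φ y - φ a ≤ ε * ‖y - b‖ ^ 2 := by
  have hgap : φ a - φ a - ε * ‖a - b‖ ^ 2 < 0 := by
    have : 0 < ε * ‖a - b‖ ^ 2 := by
      have := norm_pos_iff.mpr (sub_ne_zero.mpr hne)
      positivity
    linarith
  have hψ : ContinuousWithinAt (fun y => φ y - φ a - ε * ‖y - b‖ ^ 2) s a := by fun_prop
  obtain ⟨δ, hδ, hball⟩ := Metric.mem_nhdsWithin_iff.mp <|
    (hφ.eventually_lt continuousWithinAt_const hab).and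
      (hψ.eventually_lt continuousWithinAt_const hgap)
  refine ⟨δ, hδ, fun y hy hyδ => ?_⟩
  obtain ⟨hlt, hle⟩ := hball ⟨by rwa [Metric.mem_ball, dist_eq_norm], hy⟩
  exact ⟨hlt, by linarith⟩

section InnerProduct

variable {E : Type*} [NormedAddCommGroup E] [InnerProductSpace ℝ E]

section Model

variable {f g : E → ℝ} {fgrad : E → E} {G : E →L[ℝ] E} {s : Set E} {x : E}

lemma Theta_self : Theta f g fgrad G x x = f x + g x := by
  simp [Theta]

lemma continuousOn_Theta (hg : ContinuousOn g s) : ContinuousOn (Theta f g fgrad G x) s := by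
  unfold Theta
  fun_prop

lemma Theta_add_sq_le_Theta_self_of_isMinOn {μ : ℝ} {xbar : E}
    (hg : ConvexOn ℝ s g) (hG : ∀ u, μ * ‖u‖ ^ 2 ≤ ⟪u, G u⟫) (hx : x ∈ s) (hxbar : xbar ∈ s)
    (hmin : IsMinOn (Theta f g fgrad G x) s xbar) :
    Theta f g fgrad G x xbar + μ / 4 * ‖xbar - x‖ ^ 2 ≤ Theta f g fgrad G x x := by
  set m := (1/2 : ℝ) • xbar + (1/2 : ℝ) • x
  have hm : m - x = (1/2 : ℝ) • (xbar - x) := by module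
  have hgm : g m ≤ 1/2 * g xbar + 1/2 * g x :=
    hg.2 hxbar hx (by norm_num) (by norm_num) (by norm_num)
  have hΘm : Theta f g fgrad G x xbar ≤ Theta f g fgrad G x m :=
    isMinOn_iff.mp hmin m (hg.1 hxbar hx (by norm_num) (by norm_num) (by norm_num))
  simp only [Theta, hm, map_smul, real_inner_smul_left, real_inner_smul_right, sub_self,
    inner_zero_right, map_zero] at hΘm ⊢
  nlinarith [hG (xbar - x)]

lemma inner_add_sub_lt_of_Theta_lt {μ σ : ℝ} {y : E} (hG : ∀ u, μ * ‖u‖ ^ 2 ≤ ⟪u, G u⟫)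
    (hσ : σ ≤ μ / 2) (hy : Theta f g fgrad G x y < Theta f g fgrad G x x) :
    ⟪fgrad x, y - x⟫ + g y - g x < -σ * ‖y - x‖ ^ 2 := by
  rw [Theta_self, Theta] at hy
  nlinarith [hG (y - x), sq_nonneg ‖y - x‖]

end Model

lemma HasGradientAt.eventually_lt_add_mul [CompleteSpace E] {f : E → ℝ} {f' x d : E} {c : ℝ}
    (hf : HasGradientAt f f' x) (hc : ⟪f', d⟫ < c) :
    ∀ᶠ t in 𝓝[>] (0 : ℝ), f (x + t • d) < f x + t * c := by
  have hline : HasDerivAt (fun t : ℝ => x + t • d) d 0 := by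
    simpa using ((hasDerivAt_id (0 : ℝ)).smul_const d).const_add x
  have hφ : HasDerivAt (fun t : ℝ => f (x + t • d)) ⟪f', d⟫ 0 := by
    have hf0 : HasFDerivAt f (InnerProductSpace.toDual ℝ E f') (x + (0 : ℝ) • d) := by
      simpa using hf.hasFDerivAt
    have hcomp := hf0.comp_hasDerivAt (0 : ℝ) hline
    simp only [InnerProductSpace.toDual_apply_apply] at hcomp
    exact hcomp
  filter_upwards [(hφ.hasDerivWithinAt (s := Ioi 0)).limsup_slope_le' (lt_irrefl (0 : ℝ)) hc,
    self_mem_nhdsWithin] with t hslope (ht : 0 < t)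
  rw [slope_def_field, sub_zero, div_lt_iff₀ ht] at hslope
  simp only [zero_smul, add_zero] at hslope
  linarith

lemma exists_armijo_step [CompleteSpace E] {f g : E → ℝ} {s : Set E} {f' x y : E} {σ β : ℝ}
    (hf : HasGradientAt f f' x) (hg : ConvexOn ℝ s g) (hx : x ∈ s) (hy : y ∈ s)
    (hβ : 0 < β ∧ β < 1) (hdesc : ⟪f', y - x⟫ + g y - g x < -σ * ‖y - x‖ ^ 2) :
    ∃ m : ℕ, FE f g s (x + β ^ m • (y - x)) ≤
      ((f x + g x - σ * β ^ m * ‖y - x‖ ^ 2 : ℝ) : EReal) := by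
  have hc : ⟪f', y - x⟫ < -σ * ‖y - x‖ ^ 2 - (g y - g x) := by linarith
  obtain ⟨m, hm⟩ := ((tendsto_pow_atTop_nhdsWithin_zero_of_lt_one hβ.1 hβ.2).eventually
    (hf.eventually_lt_add_mul hc)).exists
  refine ⟨m, ?_⟩
  set t := β ^ m
  have ht0 : 0 < t := pow_pos hβ.1 m
  have ht1 : t ≤ 1 := pow_le_one₀ hβ.1.le hβ.2.le
  have hseg : x + t • (y - x) = (1 - t) • x + t • y := by module
  have hmem : x + t • (y - x) ∈ s := hseg ▸ hg.1 hx hy (by linarith) ht0.le (by ring)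
  have hchord : g (x + t • (y - x)) ≤ (1 - t) * g x + t * g y :=
    hseg ▸ hg.2 hx hy (by linarith) ht0.le (by ring)
  rw [FE_of_mem hmem, EReal.coe_le_coe_iff]
  linarith

end InnerProduct

theorem vmipg_well_defined_general
    (f g : X → ℝ) (domg O : Set X) (fgrad : X → X)
    (hclO : closure domg ⊆ O)
    (hgconv : ConvexOn ℝ domg g) (hgcont : ContinuousOn g domg)
    (hfgrad : ∀ z ∈ O, HasGradientAt f (fgrad z) z)
    (μ σ β : ℝ) (hμ : 0 < μ) (hβ : 0 < β ∧ β < 1) (hσ : 0 < σ ∧ σ < (1/2) * min 1 μ)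
    (εk : ℝ) (hεk : 0 < εk)
    (xk : X) (hxk : xk ∈ domg)
    (G : X →L[ℝ] X)
    (hGlb : ∀ u : X, μ * ‖u‖ ^ 2 ≤ ⟪u, G u⟫)
    (xbar : X)
    (hxbar : xbar ∈ domg ∧ ∀ z ∈ domg, Theta f g fgrad G xk xbar ≤ Theta f g fgrad G xk z)
    (hne : xbar ≠ xk) :
    (∃ δ > (0:ℝ), ∀ yk ∈ domg, ‖yk - xbar‖ < δ →
      Theta f g fgrad G xk yk < Theta f g fgrad G xk xk ∧
      Theta f g fgrad G xk yk - Theta f g fgrad G xk xbar ≤ εk * ‖yk - xk‖ ^ 2) ∧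
    (∀ yk ∈ domg,
      Theta f g fgrad G xk yk < Theta f g fgrad G xk xk →
      Theta f g fgrad G xk yk - Theta f g fgrad G xk xbar ≤ εk * ‖yk - xk‖ ^ 2 →
      yk - xk ≠ 0 →
      ∃ mm : ℕ, FE f g domg (xk + β ^ mm • (yk - xk)) ≤
        ((f xk + g xk - σ * β ^ mm * ‖yk - xk‖ ^ 2 : ℝ) : EReal)) := by
  obtain ⟨hxbar_mem, hmin⟩ := hxbar
  have hgap :=
    Theta_add_sq_le_Theta_self_of_isMinOn hgconv hGlb hxk hxbar_mem (isMinOn_iff.mpr hmin)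
  have hlt : Theta f g fgrad G xk xbar < Theta f g fgrad G xk xk := by
    have hdist := norm_pos_iff.mpr (sub_ne_zero.mpr hne)
    have : 0 < μ / 4 * ‖xbar - xk‖ ^ 2 := by positivity
    linarith
  refine ⟨(continuousOn_Theta hgcont xbar hxbar_mem).exists_lt_and_sub_le_mul_sq hlt hne hεk, ?_⟩
  intro yk hyk hdecrease _ _
  have hσμ : σ ≤ μ / 2 := by linarith [hσ.2, min_le_right 1 μ]
  exact exists_armijo_step (hfgrad xk (hclO (subset_closure hxk))) hgconv hxk hyk hβ
    (inner_add_sub_lt_of_Theta_lt hGlb hσμ hdecrease)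

/-- the inexactness criterion is attainable near the exact minimizer `x̄ᵏ`,
and the Armijo line search terminates. -/
theorem vmipg_well_defined
    (f g : X → ℝ) (domg O : Set X) (fgrad : X → X)
    (hdom : domg.Nonempty) (hO : IsOpen O) (hclO : closure domg ⊆ O)
    (hgconv : ConvexOn ℝ domg g) (hgcont : ContinuousOn g domg)
    (hglsc : LowerSemicontinuous (extE g domg))
    (hflsc : LowerSemicontinuous f)
    (hfC2 : ContDiffOn ℝ 2 f O)
    (hfgrad : ∀ z ∈ O, HasGradientAt f (fgrad z) z)
    (hFlb : ∃ c : ℝ, ∀ z ∈ domg, c ≤ f z + g z)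
    (μ σ β : ℝ) (hμ : 0 < μ) (hβ : 0 < β ∧ β < 1) (hσ : 0 < σ ∧ σ < (1/2) * min 1 μ)
    (εk : ℝ) (hεk : 0 < εk)
    (xk : X) (hxk : xk ∈ domg)
    (G : X →L[ℝ] X)
    (hGsa : ∀ u v : X, ⟪G u, v⟫ = ⟪u, G v⟫)
    (hGlb : ∀ u : X, μ * ‖u‖ ^ 2 ≤ ⟪u, G u⟫)
    (xbar : X)
    (hxbar : xbar ∈ domg ∧ ∀ z ∈ domg, Theta f g fgrad G xk xbar ≤ Theta f g fgrad G xk z)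
    (huniq : ∀ z ∈ domg, (∀ w ∈ domg, Theta f g fgrad G xk z ≤ Theta f g fgrad G xk w) → z = xbar)
    (hne : xbar ≠ xk) :
    (∃ δ > (0:ℝ), ∀ yk ∈ domg, ‖yk - xbar‖ < δ →
      Theta f g fgrad G xk yk < Theta f g fgrad G xk xk ∧
      Theta f g fgrad G xk yk - Theta f g fgrad G xk xbar ≤ εk * ‖yk - xk‖ ^ 2) ∧
    (∀ yk ∈ domg,
      Theta f g fgrad G xk yk < Theta f g fgrad G xk xk →
      Theta f g fgrad G xk yk - Theta f g fgrad G xk xbar ≤ εk * ‖yk - xk‖ ^ 2 →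
      yk - xk ≠ 0 →
      ∃ mm : ℕ, FE f g domg (xk + β ^ mm • (yk - xk)) ≤
        ((f xk + g xk - σ * β ^ mm * ‖yk - xk‖ ^ 2 : ℝ) : EReal)) :=
  vmipg_well_defined_general f g domg O fgrad hclO hgconv hgcont hfgrad μ σ β hμ hβ hσ εk hεk xk hxk
    G hGlb xbar hxbar hne
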